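/- Let f : ℝ → ℂ satisfy f(0) = 0, with f ∈ Ḣ^{3/4} ∩ Ḣ^1 ∩ Ḣ^2. Then f(x)/x ∈ L²(ℝ) and ‖f(x)/x‖_{L²} ≤ C(‖f‖_{Ḣ^{3/4}} + ‖f‖_{Ḣ^1} + ‖f‖_{Ḣ^2}) for an absolute constant C. -/

import Mathlib

set_option maxHeartbeats 1000000
open MeasureTheory

/-- Fourier transform with the paper's convention `f̂(ω) = (1/2π) ∫ e^{-iωx} f(x) dx`. -/
noncomputable def fhat (f : ℝ → ℂ) (ω : ℝ) : ℂ :=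
  (1 / (2 * Real.pi)) * ∫ x : ℝ, Complex.exp (-(Complex.I * (ω : ℂ) * (x : ℂ))) * f x

/-- Homogeneous Sobolev seminorm `‖f‖_{Ḣ^p}` of order `p`. -/
noncomputable def sob (p : ℝ) (f : ℝ → ℂ) : ℝ :=
  Real.sqrt (∫ ω : ℝ, |ω| ^ (2 * p) * ‖fhat f ω‖ ^ 2)

open Complex


section CS
variable {α : Type*} [MeasurableSpace α] {μ : Measure α}

/-- Cauchy–Schwarz for the Bochner integral of real functions. -/
theorem my_cs {u v : α → ℝ} (hu : AEStronglyMeasurable u μ) (hv : AEStronglyMeasurable v μ)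
    (hu2 : Integrable (fun x => u x ^ 2) μ) (hv2 : Integrable (fun x => v x ^ 2) μ) :
    Integrable (fun x => u x * v x) μ ∧
      ∫ x, u x * v x ∂μ ≤ Real.sqrt (∫ x, u x ^ 2 ∂μ) * Real.sqrt (∫ x, v x ^ 2 ∂μ) := by
  have hint : Integrable (fun x => u x * v x) μ := by
    refine Integrable.mono' ((hu2.add hv2).div_const 2) (hu.mul hv) ?_
    filter_upwards with x
    simp only [Pi.add_apply, Real.norm_eq_abs, abs_mul]
    nlinarith [sq_nonneg (|u x| - |v x|), _root_.sq_abs (u x), _root_.sq_abs (v x)]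
  refine ⟨hint, ?_⟩
  set A := ∫ x, u x ^ 2 ∂μ with hA
  set B := ∫ x, v x ^ 2 ∂μ with hB
  have hA0 : 0 ≤ A := integral_nonneg fun x => sq_nonneg _
  have hB0 : 0 ≤ B := integral_nonneg fun x => sq_nonneg _
  -- degenerate cases
  by_cases hAz : A = 0
  · have huz : u =ᵐ[μ] 0 := by
      have h2 : (fun x => u x ^ 2) =ᵐ[μ] 0 :=
        (integral_eq_zero_iff_of_nonneg (fun x => sq_nonneg _) hu2).mp hAz
      filter_upwards [h2] with x hx
      exact pow_eq_zero_iff two_ne_zero |>.mp hx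
    have : ∫ x, u x * v x ∂μ = 0 := by
      refine integral_eq_zero_of_ae ?_
      filter_upwards [huz] with x hx
      simp [hx]
    rw [this, hAz, Real.sqrt_zero, zero_mul]
  by_cases hBz : B = 0
  · have hvz : v =ᵐ[μ] 0 := by
      have h2 : (fun x => v x ^ 2) =ᵐ[μ] 0 :=
        (integral_eq_zero_iff_of_nonneg (fun x => sq_nonneg _) hv2).mp hBz
      filter_upwards [h2] with x hx
      exact pow_eq_zero_iff two_ne_zero |>.mp hx
    have : ∫ x, u x * v x ∂μ = 0 := by
      refine integral_eq_zero_of_ae ?_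
      filter_upwards [hvz] with x hx
      simp [hx]
    rw [this, hBz, Real.sqrt_zero, mul_zero]
  have hApos : 0 < A := lt_of_le_of_ne hA0 (Ne.symm hAz)
  have hBpos : 0 < B := lt_of_le_of_ne hB0 (Ne.symm hBz)
  set a := Real.sqrt A with ha
  set b := Real.sqrt B with hb
  have hap : 0 < a := Real.sqrt_pos.mpr hApos
  have hbp : 0 < b := Real.sqrt_pos.mpr hBpos
  have ha2 : a ^ 2 = A := Real.sq_sqrt hA0
  have hb2 : b ^ 2 = B := Real.sq_sqrt hB0
  set t := b / a with ht
  have htp : 0 < t := div_pos hbp hap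
  have key : ∀ x, u x * v x ≤ (t * u x ^ 2 + t⁻¹ * v x ^ 2) / 2 := by
    intro x
    have h := sq_nonneg (t * u x - v x)
    have h2 : 0 ≤ t⁻¹ := inv_nonneg.mpr htp.le
    have h3 : t * t⁻¹ = 1 := mul_inv_cancel₀ htp.ne'
    nlinarith [mul_le_mul_of_nonneg_left h h2]
  calc ∫ x, u x * v x ∂μ ≤ ∫ x, (t * u x ^ 2 + t⁻¹ * v x ^ 2) / 2 ∂μ := by
        refine integral_mono hint ?_ key
        exact ((hu2.const_mul t).add (hv2.const_mul t⁻¹)).div_const 2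
    _ = (t * A + t⁻¹ * B) / 2 := by
        rw [integral_div, integral_add (hu2.const_mul t) (hv2.const_mul t⁻¹),
          integral_const_mul, integral_const_mul]
    _ = a * b := by
        rw [ht]
        field_simp
        nlinarith [ha2, hb2]



theorem norm_exp_I_mul (t : ℝ) : ‖Complex.exp (Complex.I * (t : ℂ))‖ = 1 := by
  rw [Complex.norm_exp]
  simp

theorem norm_exp_I_sub_one_le_two (t : ℝ) : ‖Complex.exp (Complex.I * (t : ℂ)) - 1‖ ≤ 2 := by
  calc ‖Complex.exp (Complex.I * (t : ℂ)) - 1‖ ≤ ‖Complex.exp (Complex.I * (t : ℂ))‖ + ‖(1 : ℂ)‖ :=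
      norm_sub_le _ _
    _ ≤ 2 := by rw [norm_exp_I_mul]; norm_num

theorem norm_exp_I_sub_one_le (t : ℝ) : ‖Complex.exp (Complex.I * (t : ℂ)) - 1‖ ≤ 2 * |t| := by
  rcases le_or_gt ‖Complex.I * (t : ℂ)‖ 1 with h | h
  · have := Complex.norm_exp_sub_one_le (x := Complex.I * (t : ℂ)) h
    simpa [Complex.norm_exp, map_mul] using this
  · have h' : 1 < |t| := by simpa [map_mul] using h
    calc ‖Complex.exp (Complex.I * (t : ℂ)) - 1‖ ≤ 2 := norm_exp_I_sub_one_le_two t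
      _ ≤ 2 * |t| := by nlinarith

noncomputable def Jbr (r : ℝ) (x : ℝ) : ℝ := (1 + |x|) ^ (-r)

theorem Jbr_integrable {r : ℝ} (hr : 1 < r) : Integrable (Jbr r) := by
  have h := integrable_one_add_norm (E := ℝ) (μ := volume) (r := r)
    (by simpa using hr)
  exact (by simpa [Real.norm_eq_abs] using h : Integrable (fun x : ℝ => (1 + |x|) ^ (-r)))

theorem Jbr_nonneg (r x : ℝ) : 0 ≤ Jbr r x := Real.rpow_nonneg (by positivity) _

theorem Jbr_pos (r x : ℝ) : 0 < Jbr r x := Real.rpow_pos_of_pos (by positivity) _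

/-- key comparison: for `|u| ≥ 1`, `|u| ^ (-r) ≤ 2 ^ r * (1+|u|) ^ (-r)`. -/
theorem abs_rpow_neg_le {r u : ℝ} (hr : 0 ≤ r) (hu : 1 ≤ |u|) :
    |u| ^ (-r) ≤ 2 ^ r * Jbr r u := by
  have hu0 : (0:ℝ) < |u| := lt_of_lt_of_le one_pos hu
  have h1 : 1 + |u| ≤ 2 * |u| := by linarith
  have h2 : (1 + |u|) ^ r ≤ (2 * |u|) ^ r :=
    Real.rpow_le_rpow (by positivity) h1 hr
  have h3 : (2 * |u|) ^ r = 2 ^ r * |u| ^ r := Real.mul_rpow (by norm_num) (abs_nonneg u)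
  have h4 : ((2:ℝ) ^ r * |u| ^ r)⁻¹ ≤ ((1 + |u|) ^ r)⁻¹ := by
    apply inv_anti₀ (Real.rpow_pos_of_pos (by positivity) r)
    exact h2.trans_eq h3
  rw [Jbr, Real.rpow_neg (x := 1 + |u|) (by positivity), Real.rpow_neg (abs_nonneg u)]
  calc (|u| ^ r)⁻¹ = 2 ^ r * ((2:ℝ) ^ r * |u| ^ r)⁻¹ := by
        rw [mul_inv, ← mul_assoc,
          mul_inv_cancel₀ (ne_of_gt (Real.rpow_pos_of_pos two_pos r)), one_mul]
    _ ≤ 2 ^ r * ((1 + |u|) ^ r)⁻¹ :=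
        mul_le_mul_of_nonneg_left h4 (Real.rpow_nonneg (by norm_num) r)

noncomputable def hker (u : ℝ) : ℝ :=
  ‖Complex.exp (Complex.I * (u : ℂ)) - 1‖ ^ 2 * |u| ^ (-(3/2) : ℝ)

theorem hker_nonneg (u : ℝ) : 0 ≤ hker u := by
  unfold hker; positivity

theorem hker_le (u : ℝ) : hker u ≤ (4 * 2 ^ ((3:ℝ)/2)) * Jbr (3/2) u := by
  rcases eq_or_ne u 0 with rfl | hu0
  · simp only [hker, abs_zero]
    rw [Real.zero_rpow (by norm_num), mul_zero]
    exact mul_nonneg (by positivity) (Jbr_nonneg _ _)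
  have hu0' : (0:ℝ) < |u| := abs_pos.mpr hu0
  rcases le_or_gt (|u|) 1 with h1 | h1
  · -- small u : hker u ≤ 4 * |u|^(1/2) ≤ 4 ≤ RHS
    have hb : ‖Complex.exp (Complex.I * (u : ℂ)) - 1‖ ^ 2 ≤ 4 * |u| ^ (2:ℝ) := by
      have := norm_exp_I_sub_one_le u
      have h2 : ‖Complex.exp (Complex.I * (u : ℂ)) - 1‖ ^ 2 ≤ (2 * |u|) ^ 2 := by
        apply pow_le_pow_left₀ (norm_nonneg _) this
      calc ‖Complex.exp (Complex.I * (u : ℂ)) - 1‖ ^ 2 ≤ (2*|u|)^2 := h2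
        _ = 4 * |u| ^ (2:ℝ) := by
            rw [Real.rpow_two]; ring
    have step : hker u ≤ 4 * |u| ^ ((1:ℝ)/2) := by
      unfold hker
      calc ‖Complex.exp (Complex.I * (u : ℂ)) - 1‖ ^ 2 * |u| ^ (-(3/2) : ℝ)
          ≤ (4 * |u| ^ (2:ℝ)) * |u| ^ (-(3/2) : ℝ) := by
            apply mul_le_mul_of_nonneg_right hb (Real.rpow_nonneg (abs_nonneg u) _)
        _ = 4 * |u| ^ ((1:ℝ)/2) := by
            rw [mul_assoc, ← Real.rpow_add hu0']; norm_num
    have step2 : |u| ^ ((1:ℝ)/2) ≤ 1 := Real.rpow_le_one (abs_nonneg u) h1 (by norm_num)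
    have step3 : (4:ℝ) ≤ (4 * 2 ^ ((3:ℝ)/2)) * Jbr (3/2) u := by
      have h2 : (1 + |u|) ≤ 2 := by linarith
      have h3 : (1 + |u|) ^ ((3:ℝ)/2) ≤ 2 ^ ((3:ℝ)/2) :=
        Real.rpow_le_rpow (by positivity) h2 (by norm_num)
      have h4 : (2:ℝ) ^ ((3:ℝ)/2) * Jbr (3/2) u ≥ 1 := by
        rw [Jbr, Real.rpow_neg (by positivity), ge_iff_le, ← div_eq_mul_inv,
          le_div_iff₀ (Real.rpow_pos_of_pos (by positivity) _), one_mul]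
        exact h3
      nlinarith [Jbr_pos (3/2) u, Real.rpow_pos_of_pos (show (0:ℝ) < 2 by norm_num) ((3:ℝ)/2)]
    calc hker u ≤ 4 * |u| ^ ((1:ℝ)/2) := step
      _ ≤ 4 := by nlinarith
      _ ≤ _ := step3
  · -- large u : hker u ≤ 4 * |u|^(-3/2) ≤ 4 * 2^(3/2) * Jbr
    have hb : ‖Complex.exp (Complex.I * (u : ℂ)) - 1‖ ^ 2 ≤ 4 := by
      have := norm_exp_I_sub_one_le_two u
      nlinarith [norm_nonneg (Complex.exp (Complex.I * (u : ℂ)) - 1)]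
    have step : hker u ≤ 4 * |u| ^ (-(3/2) : ℝ) :=
      mul_le_mul_of_nonneg_right hb (Real.rpow_nonneg (abs_nonneg u) _)
    have step2 : |u| ^ (-(3/2) : ℝ) ≤ 2 ^ ((3:ℝ)/2) * Jbr (3/2) u :=
      abs_rpow_neg_le (by norm_num) h1.le
    calc hker u ≤ 4 * |u| ^ (-(3/2) : ℝ) := step
      _ ≤ 4 * (2 ^ ((3:ℝ)/2) * Jbr (3/2) u) := by
          apply mul_le_mul_of_nonneg_left step2 (by norm_num)
      _ = (4 * 2 ^ ((3:ℝ)/2)) * Jbr (3/2) u := by ring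

theorem hker_meas : Measurable hker := by
  apply Measurable.mul
  · fun_prop
  · fun_prop

theorem hker_int : Integrable hker := by
  refine ((Jbr_integrable (r := 3/2) (by norm_num)).const_mul (4 * 2 ^ ((3:ℝ)/2))).mono'
    hker_meas.aestronglyMeasurable ?_
  filter_upwards with u
  rw [Real.norm_eq_abs, _root_.abs_of_nonneg (hker_nonneg u)]
  exact hker_le u

theorem hker_scale {x : ℝ} (hx : x ≠ 0) :
    ∫ l : ℝ, |x| ^ ((3:ℝ)/2) * hker (x * l) =
      |x| ^ ((1:ℝ)/2) * ∫ u : ℝ, hker u := by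
  rw [integral_const_mul, MeasureTheory.Measure.integral_comp_mul_left hker x, smul_eq_mul,
    abs_inv, ← Real.rpow_neg_one |x|, ← mul_assoc, ← Real.rpow_add (abs_pos.mpr hx)]
  norm_num

theorem rpow_sq_eq (a : ℝ) (ha : 0 ≤ a) (p : ℝ) : (a ^ p) ^ 2 = a ^ (2 * p) := by
  rw [← Real.rpow_natCast (a ^ p) 2, ← Real.rpow_mul ha]
  norm_num [mul_comm]

theorem arg_eq (l x : ℝ) : Complex.I * (l : ℂ) * (x : ℂ) = Complex.I * ((x * l : ℝ) : ℂ) := by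
  push_cast; ring

theorem Jbr_ge {u : ℝ} (h : |u| ≤ 1) : 1 ≤ 2 ^ ((3:ℝ)/2) * Jbr (3/2) u := by
  have h2 : (1 + |u|) ≤ 2 := by have := abs_nonneg u; linarith
  have h3 : (1 + |u|) ^ ((3:ℝ)/2) ≤ 2 ^ ((3:ℝ)/2) :=
    Real.rpow_le_rpow (by positivity) h2 (by norm_num)
  rw [Jbr, Real.rpow_neg (by positivity), ← div_eq_mul_inv,
    le_div_iff₀ (Real.rpow_pos_of_pos (by positivity) _), one_mul]
  exact h3

theorem usq_eq {x : ℝ} (hx : x ≠ 0) (l : ℝ) :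
    (‖Complex.exp (Complex.I * (l : ℂ) * (x : ℂ)) - 1‖ * |l| ^ (-(3/4) : ℝ)) ^ 2
      = |x| ^ ((3:ℝ)/2) * hker (x * l) := by
  have hx0 : (0:ℝ) < |x| := abs_pos.mpr hx
  rcases eq_or_ne l 0 with rfl | hl
  · simp [hker, Real.zero_rpow (show (-(3/4):ℝ) ≠ 0 by norm_num),
      Real.zero_rpow (show (-(3/2):ℝ) ≠ 0 by norm_num)]
  · have hl0 : (0:ℝ) < |l| := abs_pos.mpr hl
    unfold hker
    rw [arg_eq l x, mul_pow, rpow_sq_eq |l| (abs_nonneg l) _, abs_mul,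
      Real.mul_rpow (abs_nonneg x) (abs_nonneg l)]
    have hxx : |x| ^ ((3:ℝ)/2) * (|x| ^ (-(3/2) : ℝ)) = 1 := by
      rw [← Real.rpow_add hx0]; norm_num
    have hexp : (2 : ℝ) * (-(3/4)) = -(3/2) := by norm_num
    rw [hexp]
    calc ‖Complex.exp (Complex.I * ((x*l : ℝ):ℂ)) - 1‖ ^ 2 * |l| ^ (-(3/2) : ℝ)
        = (|x| ^ ((3:ℝ)/2) * (|x| ^ (-(3/2) : ℝ))) *
            (‖Complex.exp (Complex.I * ((x*l : ℝ):ℂ)) - 1‖ ^ 2 * |l| ^ (-(3/2) : ℝ)) := by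
          rw [hxx, one_mul]
      _ = |x| ^ ((3:ℝ)/2) *
            (‖Complex.exp (Complex.I * ((x*l : ℝ):ℂ)) - 1‖ ^ 2 *
              (|x| ^ (-(3/2) : ℝ) * |l| ^ (-(3/2) : ℝ))) := by ring

theorem vsq_eq (l : ℝ) (n : ℝ) :
    (|l| ^ ((3:ℝ)/4) * n) ^ 2 = |l| ^ ((3:ℝ)/2) * n ^ 2 := by
  rw [mul_pow, rpow_sq_eq |l| (abs_nonneg l)]
  norm_num

noncomputable def Kj : ℝ := ∫ x : ℝ, Jbr (3/2) x
noncomputable def K2c : ℝ := ∫ x : ℝ, Jbr 2 x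
noncomputable def Kh : ℝ := ∫ u : ℝ, hker u
noncomputable def aC : ℝ := Real.sqrt 2 + Real.sqrt (4 * K2c)
noncomputable def DC : ℝ := 2 ^ ((3:ℝ)/2) * Kj * (4 * aC ^ 2 + Kh)
noncomputable def CC : ℝ := Real.sqrt DC + 1

theorem Kj_nonneg : 0 ≤ Kj := integral_nonneg fun x => Jbr_nonneg _ _
theorem K2c_nonneg : 0 ≤ K2c := integral_nonneg fun x => Jbr_nonneg _ _
theorem Kh_nonneg : 0 ≤ Kh := integral_nonneg hker_nonneg
theorem aC_nonneg : 0 ≤ aC := add_nonneg (Real.sqrt_nonneg _) (Real.sqrt_nonneg _)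
theorem DC_nonneg : 0 ≤ DC := by
  unfold DC
  have h1 : (0:ℝ) ≤ 2 ^ ((3:ℝ)/2) := Real.rpow_nonneg (by norm_num) _
  have := Kj_nonneg; have := Kh_nonneg
  have h2 : (0:ℝ) ≤ 4 * aC ^ 2 + Kh := by positivity
  positivity
theorem CC_pos : 0 < CC := by
  unfold CC
  have := Real.sqrt_nonneg DC
  linarith

theorem main_est (f g : ℝ → ℂ) (hf0 : f 0 = 0) (hg : Integrable g)
    (h34 : Integrable (fun ω : ℝ => |ω| ^ ((3:ℝ)/2) * ‖g ω‖ ^ 2))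
    (h1 : Integrable (fun ω : ℝ => |ω| ^ ((2:ℝ)) * ‖g ω‖ ^ 2))
    (h2 : Integrable (fun ω : ℝ => |ω| ^ ((4:ℝ)) * ‖g ω‖ ^ 2))
    (hinv : ∀ x : ℝ, f x = ∫ l : ℝ, Complex.exp (Complex.I * (l : ℂ) * (x : ℂ)) * g l) :
    MemLp (fun x : ℝ => f x / (x : ℂ)) 2 (volume : Measure ℝ) ∧
      Real.sqrt (∫ x : ℝ, ‖f x / (x : ℂ)‖ ^ 2) ≤
        CC * (Real.sqrt (∫ ω : ℝ, |ω| ^ ((3:ℝ)/2) * ‖g ω‖ ^ 2)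
          + Real.sqrt (∫ ω : ℝ, |ω| ^ ((2:ℝ)) * ‖g ω‖ ^ 2)
          + Real.sqrt (∫ ω : ℝ, |ω| ^ ((4:ℝ)) * ‖g ω‖ ^ 2)) := by
  have hgm : AEStronglyMeasurable g volume := hg.1
  set S34 : ℝ := ∫ ω : ℝ, |ω| ^ ((3:ℝ)/2) * ‖g ω‖ ^ 2 with hS34def
  set S1 : ℝ := ∫ ω : ℝ, |ω| ^ ((2:ℝ)) * ‖g ω‖ ^ 2 with hS1def
  set S2 : ℝ := ∫ ω : ℝ, |ω| ^ ((4:ℝ)) * ‖g ω‖ ^ 2 with hS2def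
  have hS34nn : 0 ≤ S34 := integral_nonneg fun ω => by positivity
  have hS1nn : 0 ≤ S1 := integral_nonneg fun ω => by positivity
  have hS2nn : 0 ≤ S2 := integral_nonneg fun ω => by positivity
  -- integrability of the inversion integrand
  have hexpc : ∀ x : ℝ, Continuous fun l : ℝ => Complex.exp (Complex.I * (l : ℂ) * (x : ℂ)) := by
    intro x; fun_prop
  have hexpnorm : ∀ x l : ℝ, ‖Complex.exp (Complex.I * (l : ℂ) * (x : ℂ))‖ = 1 := by
    intro x l
    rw [show Complex.I * (l : ℂ) * (x : ℂ) = Complex.I * ((l*x : ℝ) : ℂ) by push_cast; ring]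
    exact norm_exp_I_mul (l*x)
  have hexpint : ∀ x : ℝ,
      Integrable (fun l : ℝ => Complex.exp (Complex.I * (l : ℂ) * (x : ℂ)) * g l) := by
    intro x
    exact hg.bdd_mul (c := 1) (hexpc x).aestronglyMeasurable (ae_of_all _ fun l => le_of_eq (hexpnorm x l))
  have hgint0 : ∫ l : ℝ, g l = 0 := by
    have h := hinv 0
    rw [hf0] at h
    simp only [Complex.ofReal_zero, mul_zero, Complex.exp_zero, one_mul] at h
    exact h.symm
  -- representation f x = ∫ (e^{ilx} - 1) g l
  have hrep : ∀ x : ℝ,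
      f x = ∫ l : ℝ, (Complex.exp (Complex.I * (l : ℂ) * (x : ℂ)) - 1) * g l := by
    intro x
    have e1 : ∫ l : ℝ, (Complex.exp (Complex.I * (l : ℂ) * (x : ℂ)) - 1) * g l
        = ∫ l : ℝ, (Complex.exp (Complex.I * (l : ℂ) * (x : ℂ)) * g l - g l) := by
      congr 1; funext l; ring
    rw [e1, integral_sub (hexpint x) hg, hgint0, sub_zero, ← hinv x]
  have hfnorm : ∀ x : ℝ,
      ‖f x‖ ≤ ∫ l : ℝ, ‖Complex.exp (Complex.I * (l : ℂ) * (x : ℂ)) - 1‖ * ‖g l‖ := by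
    intro x
    rw [hrep x]
    refine (norm_integral_le_integral_norm _).trans_eq ?_
    congr 1; funext l; rw [norm_mul]
  -- ∫ |l| ‖g l‖ bound
  set S : Set ℝ := Set.Icc (-1 : ℝ) 1 with hSdef
  have hSmeas : MeasurableSet S := measurableSet_Icc
  have hmemS : ∀ l : ℝ, l ∈ S ↔ |l| ≤ 1 := fun l => by
    rw [hSdef, Set.mem_Icc, abs_le]
  have hmemSc : ∀ l : ℝ, l ∈ Sᶜ ↔ 1 < |l| := fun l => by
    rw [Set.mem_compl_iff, hmemS, not_le]
  have hvm : AEStronglyMeasurable (fun l : ℝ => |l| * ‖g l‖) volume :=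
    (measurable_abs.aestronglyMeasurable.aemeasurable.mul
      hgm.norm.aemeasurable).aestronglyMeasurable
  have hv2eq : (fun l : ℝ => (|l| * ‖g l‖) ^ 2) = fun l : ℝ => |l| ^ ((2:ℝ)) * ‖g l‖ ^ 2 := by
    funext l
    rw [mul_pow, ← Real.rpow_natCast |l| 2]
    norm_num
  have hv2int : Integrable (fun l : ℝ => (|l| * ‖g l‖) ^ 2) := by rw [hv2eq]; exact h1
  -- IntegrableOn S
  have hIonS : IntegrableOn (fun l : ℝ => |l| * ‖g l‖) S := by
    refine (hg.norm.restrict (s := S)).mono' (hvm.restrict) ?_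
    filter_upwards [ae_restrict_mem hSmeas] with l hl
    rw [Real.norm_eq_abs, _root_.abs_of_nonneg (by positivity)]
    have h1l : |l| ≤ 1 := (hmemS l).mp hl
    nlinarith [norm_nonneg (g l), abs_nonneg l]
  -- CS on S with u = 1
  have csS := my_cs (μ := volume.restrict S) (u := fun _ : ℝ => (1:ℝ))
    (v := fun l : ℝ => |l| * ‖g l‖) aestronglyMeasurable_const hvm.restrict
    (by
      have hfin : volume S < ⊤ := by rw [hSdef, Real.volume_Icc]; exact ENNReal.ofReal_lt_top
      simpa using (integrableOn_const (C := (1:ℝ)) (s := S) (μ := volume)).mpr (Or.inr hfin))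
    (hv2int.restrict)
  have hintS1 : ∫ l in S, (1:ℝ) ^ 2 = 2 := by
    simp only [one_pow]
    rw [setIntegral_const, hSdef, Real.volume_real_Icc, smul_eq_mul, mul_one]
    norm_num [ENNReal.toReal_ofReal]
  have hSv2 : ∫ l in S, (|l| * ‖g l‖) ^ 2 ≤ S1 := by
    rw [hv2eq]
    exact setIntegral_le_integral h1 (ae_of_all _ fun l => by positivity)
  have hboundS : ∫ l in S, |l| * ‖g l‖ ≤ Real.sqrt 2 * Real.sqrt S1 := by
    have := csS.2
    simp only [one_mul] at this
    refine this.trans ?_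
    rw [hintS1]
    exact mul_le_mul_of_nonneg_left (Real.sqrt_le_sqrt hSv2) (Real.sqrt_nonneg _)
  -- CS on Sᶜ with u = |l|⁻¹, v = l^2 ‖g l‖
  have huvSc : ∀ l : ℝ, |l|⁻¹ * (l ^ 2 * ‖g l‖) = |l| * ‖g l‖ := by
    intro l
    rcases eq_or_ne l 0 with rfl | hl
    · simp
    · rw [← _root_.sq_abs l, pow_two, ← mul_assoc, ← mul_assoc,
        inv_mul_cancel₀ (abs_ne_zero.mpr hl), one_mul]
  have husqSc : ∀ l : ℝ, l ∈ Sᶜ → (|l|⁻¹) ^ 2 ≤ 4 * Jbr 2 l := by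
    intro l hl
    have h1l : 1 < |l| := (hmemSc l).mp hl
    have := abs_rpow_neg_le (r := 2) (u := l) (by norm_num) h1l.le
    have heq : |l| ^ (-(2:ℝ)) = (|l|⁻¹) ^ 2 := by
      rw [inv_pow, ← Real.rpow_natCast |l| 2, ← Real.rpow_neg (abs_nonneg l)]
      norm_num
    rw [heq] at this
    refine this.trans ?_
    have h4 : (2:ℝ) ^ (2:ℝ) = 4 := by
      rw [show (4:ℝ) = 2 ^ (2:ℕ) by norm_num, ← Real.rpow_natCast (2:ℝ) 2]; norm_num
    rw [h4]
  have hu2Sc : IntegrableOn (fun l : ℝ => (|l|⁻¹) ^ 2) Sᶜ := by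
    refine (((Jbr_integrable (r := 2) (by norm_num)).const_mul 4).restrict (s := Sᶜ)).mono'
      ((measurable_abs.inv.pow_const 2).aestronglyMeasurable.restrict) ?_
    filter_upwards [ae_restrict_mem hSmeas.compl] with l hl
    rw [Real.norm_eq_abs, _root_.abs_of_nonneg (by positivity)]
    exact husqSc l hl
  have hv2Sceq : (fun l : ℝ => (l ^ 2 * ‖g l‖) ^ 2) = fun l : ℝ => |l| ^ ((4:ℝ)) * ‖g l‖ ^ 2 := by
    funext l
    have h4 : |l| ^ ((4:ℝ)) = (l ^ 2) ^ 2 := by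
      rw [show ((4:ℝ)) = ((4:ℕ):ℝ) by norm_num, Real.rpow_natCast,
        show (4:ℕ) = 2 * 2 from rfl, pow_mul, _root_.sq_abs]
    rw [mul_pow, h4]
  have hv2Sc : Integrable (fun l : ℝ => (l ^ 2 * ‖g l‖) ^ 2) := by rw [hv2Sceq]; exact h2
  have csSc := my_cs (μ := volume.restrict Sᶜ) (u := fun l : ℝ => |l|⁻¹)
    (v := fun l : ℝ => l ^ 2 * ‖g l‖)
    (measurable_abs.inv.aestronglyMeasurable.restrict)
    ((by fun_prop : Measurable fun l : ℝ => l ^ 2).aestronglyMeasurable.aemeasurable.mul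
      hgm.norm.aemeasurable).aestronglyMeasurable.restrict
    hu2Sc (hv2Sc.restrict)
  have hScu2 : ∫ l in Sᶜ, (|l|⁻¹) ^ 2 ≤ 4 * K2c := by
    calc ∫ l in Sᶜ, (|l|⁻¹) ^ 2 ≤ ∫ l in Sᶜ, 4 * Jbr 2 l :=
          setIntegral_mono_on hu2Sc
            (((Jbr_integrable (r := 2) (by norm_num)).const_mul 4).restrict) hSmeas.compl husqSc
      _ ≤ ∫ l : ℝ, 4 * Jbr 2 l := by
          refine setIntegral_le_integral ((Jbr_integrable (by norm_num)).const_mul 4)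
            (ae_of_all _ fun l => by
              have := Jbr_nonneg 2 l; positivity)
      _ = 4 * K2c := by rw [integral_const_mul]; rfl
  have hScv2 : ∫ l in Sᶜ, (l ^ 2 * ‖g l‖) ^ 2 ≤ S2 := by
    rw [hv2Sceq]
    exact setIntegral_le_integral h2 (ae_of_all _ fun l => by positivity)
  have hIonSc : IntegrableOn (fun l : ℝ => |l| * ‖g l‖) Sᶜ := by
    refine csSc.1.congr ?_
    filter_upwards with l using huvSc l
  have hboundSc : ∫ l in Sᶜ, |l| * ‖g l‖ ≤ Real.sqrt (4 * K2c) * Real.sqrt S2 := by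
    have h := csSc.2
    have e : ∫ l in Sᶜ, |l|⁻¹ * (l ^ 2 * ‖g l‖) = ∫ l in Sᶜ, |l| * ‖g l‖ := by
      congr 1; funext l; exact huvSc l
    rw [e] at h
    refine h.trans ?_
    exact mul_le_mul (Real.sqrt_le_sqrt hScu2) (Real.sqrt_le_sqrt hScv2)
      (Real.sqrt_nonneg _) (Real.sqrt_nonneg _)
  have hI1int : Integrable (fun l : ℝ => |l| * ‖g l‖) := by
    rw [← integrableOn_univ, ← Set.union_compl_self S]
    exact hIonS.union hIonSc
  set I1 : ℝ := ∫ l : ℝ, |l| * ‖g l‖ with hI1def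
  have hI1nn : 0 ≤ I1 := integral_nonneg fun l => by positivity
  have hI1b : I1 ≤ Real.sqrt 2 * Real.sqrt S1 + Real.sqrt (4 * K2c) * Real.sqrt S2 := by
    rw [hI1def, ← integral_add_compl hSmeas hI1int]
    exact add_le_add hboundS hboundSc
  -- pointwise bound for small x
  have hsmall : ∀ x : ℝ, ‖f x‖ ≤ 2 * |x| * I1 := by
    intro x
    refine (hfnorm x).trans ?_
    have hmaj : ∀ l : ℝ, ‖Complex.exp (Complex.I * (l : ℂ) * (x : ℂ)) - 1‖ * ‖g l‖
        ≤ (2 * |x|) * (|l| * ‖g l‖) := by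
      intro l
      have hb : ‖Complex.exp (Complex.I * (l : ℂ) * (x : ℂ)) - 1‖ ≤ 2 * |l * x| := by
        rw [show Complex.I * (l : ℂ) * (x : ℂ) = Complex.I * ((l*x : ℝ) : ℂ) by push_cast; ring]
        exact norm_exp_I_sub_one_le (l*x)
      calc ‖Complex.exp (Complex.I * (l : ℂ) * (x : ℂ)) - 1‖ * ‖g l‖
          ≤ (2 * |l * x|) * ‖g l‖ := mul_le_mul_of_nonneg_right hb (norm_nonneg _)
        _ = (2 * |x|) * (|l| * ‖g l‖) := by rw [abs_mul]; ring
    calc ∫ l : ℝ, ‖Complex.exp (Complex.I * (l : ℂ) * (x : ℂ)) - 1‖ * ‖g l‖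
        ≤ ∫ l : ℝ, (2 * |x|) * (|l| * ‖g l‖) :=
          integral_mono_of_nonneg (ae_of_all _ fun l => by positivity)
            (hI1int.const_mul _) (ae_of_all _ hmaj)
      _ = 2 * |x| * I1 := by rw [integral_const_mul]
  -- pointwise bound for large x
  have hlarge : ∀ x : ℝ, x ≠ 0 → ‖f x‖ ^ 2 ≤ Kh * S34 * |x| ^ ((1:ℝ)/2) := by
    intro x hx
    set u : ℝ → ℝ := fun l => ‖Complex.exp (Complex.I * (l : ℂ) * (x : ℂ)) - 1‖ *
      |l| ^ (-(3/4) : ℝ) with hudef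
    set v : ℝ → ℝ := fun l => |l| ^ ((3:ℝ)/4) * ‖g l‖ with hvdef
    have huv : ∀ l : ℝ, u l * v l
        = ‖Complex.exp (Complex.I * (l : ℂ) * (x : ℂ)) - 1‖ * ‖g l‖ := by
      intro l
      rcases eq_or_ne l 0 with rfl | hl
      · simp [hudef, hvdef, Real.zero_rpow (show (-(3/4):ℝ) ≠ 0 by norm_num)]
      · have h0 : (0:ℝ) < |l| := abs_pos.mpr hl
        have hone : |l| ^ (-(3/4) : ℝ) * |l| ^ ((3:ℝ)/4) = 1 := by
          rw [← Real.rpow_add h0]; norm_num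
        calc u l * v l = ‖Complex.exp (Complex.I * (l : ℂ) * (x : ℂ)) - 1‖ * ‖g l‖ *
              (|l| ^ (-(3/4) : ℝ) * |l| ^ ((3:ℝ)/4)) := by rw [hudef, hvdef]; ring
          _ = ‖Complex.exp (Complex.I * (l : ℂ) * (x : ℂ)) - 1‖ * ‖g l‖ := by
              rw [hone, mul_one]
    have husq : (fun l : ℝ => u l ^ 2) = fun l : ℝ => |x| ^ ((3:ℝ)/2) * hker (x * l) :=
      funext fun l => usq_eq hx l
    have hvsq : (fun l : ℝ => v l ^ 2) = fun l : ℝ => |l| ^ ((3:ℝ)/2) * ‖g l‖ ^ 2 :=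
      funext fun l => vsq_eq l ‖g l‖
    have hu2 : Integrable (fun l : ℝ => u l ^ 2) := by
      rw [husq]
      exact (hker_int.comp_mul_left' hx).const_mul _
    have hv2 : Integrable (fun l : ℝ => v l ^ 2) := by rw [hvsq]; exact h34
    have hum : AEStronglyMeasurable u volume :=
      (by fun_prop :
        Measurable fun l : ℝ => ‖Complex.exp (Complex.I * (l : ℂ) * (x : ℂ)) - 1‖ *
          |l| ^ (-(3/4) : ℝ)).aestronglyMeasurable
    have hvmm : AEStronglyMeasurable v volume :=
      ((by fun_prop : Measurable fun l : ℝ => |l| ^ ((3:ℝ)/4)).aemeasurable.mul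
        hgm.norm.aemeasurable).aestronglyMeasurable
    obtain ⟨hintuv, hcs⟩ := my_cs hum hvmm hu2 hv2
    have e1 : ‖f x‖ ≤ ∫ l : ℝ, u l * v l := by
      refine (hfnorm x).trans_eq ?_
      congr 1; funext l; exact (huv l).symm
    have e2 : ∫ l : ℝ, u l ^ 2 = |x| ^ ((1:ℝ)/2) * Kh := by
      rw [husq]; exact hker_scale hx
    have e3 : ∫ l : ℝ, v l ^ 2 = S34 := by rw [hvsq]
    have huvnn : 0 ≤ ∫ l : ℝ, u l * v l := by
      refine integral_nonneg fun l => ?_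
      rw [huv l]; positivity
    have hAnn : 0 ≤ ∫ l : ℝ, u l ^ 2 := integral_nonneg fun l => sq_nonneg _
    have hBnn : 0 ≤ ∫ l : ℝ, v l ^ 2 := integral_nonneg fun l => sq_nonneg _
    have h4 : ‖f x‖ ^ 2 ≤ (∫ l : ℝ, u l * v l) ^ 2 := pow_le_pow_left₀ (norm_nonneg _) e1 2
    have h5 : (∫ l : ℝ, u l * v l) ^ 2 ≤ (∫ l : ℝ, u l ^ 2) * (∫ l : ℝ, v l ^ 2) := by
      calc (∫ l : ℝ, u l * v l) ^ 2
          ≤ (Real.sqrt (∫ l : ℝ, u l ^ 2) * Real.sqrt (∫ l : ℝ, v l ^ 2)) ^ 2 :=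
            pow_le_pow_left₀ huvnn hcs 2
        _ = (∫ l : ℝ, u l ^ 2) * (∫ l : ℝ, v l ^ 2) := by
            rw [mul_pow, Real.sq_sqrt hAnn, Real.sq_sqrt hBnn]
    calc ‖f x‖ ^ 2 ≤ (∫ l : ℝ, u l * v l) ^ 2 := h4
      _ ≤ (∫ l : ℝ, u l ^ 2) * (∫ l : ℝ, v l ^ 2) := h5
      _ = Kh * S34 * |x| ^ ((1:ℝ)/2) := by rw [e2, e3]; ring
  -- continuity of f, hence measurability of f x / x
  have hfc : Continuous f := by
    have hc : Continuous fun x : ℝ => ∫ l : ℝ, Complex.exp (Complex.I * (l : ℂ) * (x : ℂ)) * g l := by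
      refine continuous_of_dominated (bound := fun l => ‖g l‖) (fun x => (hexpint x).1)
        (fun x => ae_of_all _ fun l => ?_) hg.norm (ae_of_all _ fun l => ?_)
      · rw [norm_mul, hexpnorm x l, one_mul]
      · fun_prop
    rw [show f = fun x : ℝ => ∫ l : ℝ, Complex.exp (Complex.I * (l : ℂ) * (x : ℂ)) * g l from
      funext hinv]
    exact hc
  have hdivm : AEStronglyMeasurable (fun x : ℝ => f x / (x : ℂ)) volume :=
    (hfc.aestronglyMeasurable.aemeasurable.div
      Complex.measurable_ofReal.aemeasurable).aestronglyMeasurable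
  -- the integrable majorant
  set cM : ℝ := 2 ^ ((3:ℝ)/2) * (4 * I1 ^ 2 + Kh * S34) with hcMdef
  have hr32nn : (0:ℝ) ≤ 2 ^ ((3:ℝ)/2) := Real.rpow_nonneg (by norm_num) _
  have hKhS : (0:ℝ) ≤ Kh * S34 := mul_nonneg Kh_nonneg hS34nn
  have hsum : (0:ℝ) ≤ 4 * I1 ^ 2 + Kh * S34 := by positivity
  have hcMnn : 0 ≤ cM := mul_nonneg hr32nn hsum
  have hnormdiv : ∀ x : ℝ, ‖f x / (x : ℂ)‖ = ‖f x‖ / |x| := by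
    intro x
    rw [norm_div, Complex.norm_real, Real.norm_eq_abs]
  have hM : ∀ x : ℝ, ‖f x / (x : ℂ)‖ ^ 2 ≤ cM * Jbr (3/2) x := by
    intro x
    rcases eq_or_ne x 0 with rfl | hx
    · have : ‖f 0 / ((0:ℝ) : ℂ)‖ ^ 2 = 0 := by
        rw [hf0]; simp
      rw [this]
      exact mul_nonneg hcMnn (Jbr_nonneg _ _)
    rcases le_or_gt |x| 1 with hsm | hlg
    · have hxpos : 0 < |x| := abs_pos.mpr hx
      have hfd : ‖f x / (x : ℂ)‖ ≤ 2 * I1 := by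
        rw [hnormdiv x, div_le_iff₀ hxpos]
        calc ‖f x‖ ≤ 2 * |x| * I1 := hsmall x
          _ = 2 * I1 * |x| := by ring
      have h1' : ‖f x / (x : ℂ)‖ ^ 2 ≤ (2 * I1) ^ 2 :=
        pow_le_pow_left₀ (norm_nonneg _) hfd 2
      have h2' := Jbr_ge hsm
      have h3' : (2 * I1) ^ 2 ≤ cM * Jbr (3/2) x := by
        have e : cM * Jbr (3/2) x = (4 * I1 ^ 2 + Kh * S34) * (2 ^ ((3:ℝ)/2) * Jbr (3/2) x) := by
          rw [hcMdef]; ring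
        rw [e]
        calc (2 * I1) ^ 2 = (4 * I1 ^ 2) * 1 := by ring
          _ ≤ (4 * I1 ^ 2 + Kh * S34) * 1 :=
              mul_le_mul_of_nonneg_right (by linarith) zero_le_one
          _ ≤ (4 * I1 ^ 2 + Kh * S34) * (2 ^ ((3:ℝ)/2) * Jbr (3/2) x) :=
              mul_le_mul_of_nonneg_left h2' hsum
      exact h1'.trans h3'
    · have hxpos : (0:ℝ) < |x| := by linarith
      have hsq : ‖f x / (x : ℂ)‖ ^ 2 = ‖f x‖ ^ 2 / |x| ^ 2 := by
        rw [hnormdiv x, div_pow]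
      have hfb := hlarge x hx
      have hx2 : (0:ℝ) < |x| ^ 2 := by positivity
      have step1 : ‖f x‖ ^ 2 / |x| ^ 2 ≤ Kh * S34 * |x| ^ (-(3/2) : ℝ) := by
        rw [div_le_iff₀ hx2]
        have e : Kh * S34 * |x| ^ (-(3/2) : ℝ) * |x| ^ 2 = Kh * S34 * |x| ^ ((1:ℝ)/2) := by
          rw [mul_assoc, ← Real.rpow_natCast |x| 2, ← Real.rpow_add hxpos]
          norm_num
        rw [e]; exact hfb
      have step2 : |x| ^ (-(3/2) : ℝ) ≤ 2 ^ ((3:ℝ)/2) * Jbr (3/2) x :=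
        abs_rpow_neg_le (by norm_num) hlg.le
      have hprod : (0:ℝ) ≤ 2 ^ ((3:ℝ)/2) * Jbr (3/2) x * (4 * I1 ^ 2) :=
        mul_nonneg (mul_nonneg hr32nn (Jbr_nonneg _ _)) (by positivity)
      calc ‖f x / (x : ℂ)‖ ^ 2 = ‖f x‖ ^ 2 / |x| ^ 2 := hsq
        _ ≤ Kh * S34 * |x| ^ (-(3/2) : ℝ) := step1
        _ ≤ Kh * S34 * (2 ^ ((3:ℝ)/2) * Jbr (3/2) x) :=
            mul_le_mul_of_nonneg_left step2 hKhS
        _ ≤ cM * Jbr (3/2) x := by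
            rw [hcMdef]; nlinarith [hprod]
  have hMint : Integrable (fun x : ℝ => cM * Jbr (3/2) x) :=
    (Jbr_integrable (by norm_num)).const_mul _
  have hsqint : Integrable (fun x : ℝ => ‖f x / (x : ℂ)‖ ^ 2) := by
    refine hMint.mono' ?_ (ae_of_all _ fun x => ?_)
    · exact (hdivm.norm.aemeasurable.pow_const 2).aestronglyMeasurable
    · rw [Real.norm_eq_abs, _root_.abs_of_nonneg (sq_nonneg _)]
      exact hM x
  refine ⟨(memLp_two_iff_integrable_sq_norm hdivm).mpr hsqint, ?_⟩
  have hIb : ∫ x : ℝ, ‖f x / (x : ℂ)‖ ^ 2 ≤ cM * Kj := by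
    calc ∫ x : ℝ, ‖f x / (x : ℂ)‖ ^ 2 ≤ ∫ x : ℝ, cM * Jbr (3/2) x :=
          integral_mono hsqint hMint hM
      _ = cM * Kj := by rw [integral_const_mul]; rfl
  have hTnn : (0:ℝ) ≤ Real.sqrt S34 + Real.sqrt S1 + Real.sqrt S2 := by positivity
  have hI1T : I1 ≤ aC * (Real.sqrt S34 + Real.sqrt S1 + Real.sqrt S2) := by
    refine hI1b.trans ?_
    have ha1 : Real.sqrt 2 ≤ aC := le_add_of_nonneg_right (Real.sqrt_nonneg _)
    have ha2 : Real.sqrt (4 * K2c) ≤ aC := le_add_of_nonneg_left (Real.sqrt_nonneg _)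
    nlinarith [Real.sqrt_nonneg S1, Real.sqrt_nonneg S2, Real.sqrt_nonneg S34,
      mul_le_mul_of_nonneg_right ha1 (Real.sqrt_nonneg S1),
      mul_le_mul_of_nonneg_right ha2 (Real.sqrt_nonneg S2),
      mul_nonneg aC_nonneg (Real.sqrt_nonneg S34)]
  have hcMKj : cM * Kj ≤ DC * (Real.sqrt S34 + Real.sqrt S1 + Real.sqrt S2) ^ 2 := by
    have hs0 : Real.sqrt S34 ^ 2 = S34 := Real.sq_sqrt hS34nn
    have hI1sq : I1 ^ 2 ≤ aC ^ 2 * (Real.sqrt S34 + Real.sqrt S1 + Real.sqrt S2) ^ 2 := by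
      have := pow_le_pow_left₀ hI1nn hI1T 2
      rwa [mul_pow] at this
    have hS34T : S34 ≤ (Real.sqrt S34 + Real.sqrt S1 + Real.sqrt S2) ^ 2 := by
      nlinarith [Real.sqrt_nonneg S34, Real.sqrt_nonneg S1, Real.sqrt_nonneg S2, hs0]
    have ht1 : 4 * I1 ^ 2 + Kh * S34
        ≤ (4 * aC ^ 2 + Kh) * (Real.sqrt S34 + Real.sqrt S1 + Real.sqrt S2) ^ 2 := by
      have p1 : Kh * S34 ≤ Kh * (Real.sqrt S34 + Real.sqrt S1 + Real.sqrt S2) ^ 2 :=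
        mul_le_mul_of_nonneg_left hS34T Kh_nonneg
      nlinarith [hI1sq]
    calc cM * Kj = 2 ^ ((3:ℝ)/2) * Kj * (4 * I1 ^ 2 + Kh * S34) := by rw [hcMdef]; ring
      _ ≤ 2 ^ ((3:ℝ)/2) * Kj *
            ((4 * aC ^ 2 + Kh) * (Real.sqrt S34 + Real.sqrt S1 + Real.sqrt S2) ^ 2) :=
          mul_le_mul_of_nonneg_left ht1 (mul_nonneg hr32nn Kj_nonneg)
      _ = DC * (Real.sqrt S34 + Real.sqrt S1 + Real.sqrt S2) ^ 2 := by
          simp only [DC]; ring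
  have hfinal : Real.sqrt (∫ x : ℝ, ‖f x / (x : ℂ)‖ ^ 2)
      ≤ Real.sqrt (DC * (Real.sqrt S34 + Real.sqrt S1 + Real.sqrt S2) ^ 2) :=
    Real.sqrt_le_sqrt (hIb.trans hcMKj)
  refine hfinal.trans ?_
  rw [Real.sqrt_mul DC_nonneg, Real.sqrt_sq hTnn]
  have hCCge : Real.sqrt DC ≤ CC := by
    rw [CC]; exact le_add_of_nonneg_right zero_le_one
  exact mul_le_mul_of_nonneg_right hCCge hTnn


/-- if `f(0) = 0` and `f ∈ Ḣ^{3/4} ∩ Ḣ^1 ∩ Ḣ^2`, then `f(x)/x ∈ L²` with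
`‖f(x)/x‖_{L²} ≤ C (‖f‖_{Ḣ^{3/4}} + ‖f‖_{Ḣ^1} + ‖f‖_{Ḣ^2})` for an absolute constant. -/
theorem div_x_L2_bound :
    ∃ C : ℝ, 0 < C ∧ ∀ f : ℝ → ℂ, f 0 = 0 →
      Integrable (fun ω : ℝ => |ω| ^ (2 * (3 / 4 : ℝ)) * ‖fhat f ω‖ ^ 2) →
      Integrable (fun ω : ℝ => |ω| ^ (2 * (1 : ℝ)) * ‖fhat f ω‖ ^ 2) →
      Integrable (fun ω : ℝ => |ω| ^ (2 * (2 : ℝ)) * ‖fhat f ω‖ ^ 2) →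
      (∀ x : ℝ, f x = ∫ l : ℝ, Complex.exp (Complex.I * (l : ℂ) * (x : ℂ)) * fhat f l) →
      MemLp (fun x : ℝ => f x / (x : ℂ)) 2 (volume : Measure ℝ) ∧
        Real.sqrt (∫ x : ℝ, ‖f x / (x : ℂ)‖ ^ 2) ≤
          C * (sob (3 / 4) f + sob 1 f + sob 2 f) := by
  refine ⟨CC, CC_pos, ?_⟩
  intro f hf0 h34 h1 h2 hinv
  have e34 : (2 * (3 / 4 : ℝ)) = (3:ℝ)/2 := by norm_num
  have e1 : (2 * (1 : ℝ)) = (2:ℝ) := by norm_num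
  have e2 : (2 * (2 : ℝ)) = (4:ℝ) := by norm_num
  rw [e34] at h34
  rw [e1] at h1
  rw [e2] at h2
  unfold sob
  rw [e34, e1, e2]
  by_cases hg : Integrable (fhat f) volume
  · exact main_est f (fhat f) hf0 hg h34 h1 h2 hinv
  · -- degenerate case: the inversion integral is undefined, so `f ≡ 0`
    have hfz : ∀ x : ℝ, f x = 0 := by
      intro x
      rw [hinv x]
      apply integral_undef
      intro hcon
      apply hg
      have hb : AEStronglyMeasurable
          (fun l : ℝ => Complex.exp (-(Complex.I * (l : ℂ) * (x : ℂ)))) volume :=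
        (by fun_prop : Continuous fun l : ℝ =>
          Complex.exp (-(Complex.I * (l : ℂ) * (x : ℂ)))).aestronglyMeasurable
      have hbd : ∀ l : ℝ, ‖Complex.exp (-(Complex.I * (l : ℂ) * (x : ℂ)))‖ ≤ 1 := by
        intro l
        rw [show -(Complex.I * (l : ℂ) * (x : ℂ)) = Complex.I * ((-(l*x) : ℝ) : ℂ) by
          push_cast; ring]
        exact le_of_eq (norm_exp_I_mul _)
      have h3 := hcon.bdd_mul (c := 1) hb (ae_of_all _ hbd)
      refine h3.congr ?_
      filter_upwards with l
      rw [← mul_assoc, ← Complex.exp_add]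
      simp
    constructor
    · have hfun : (fun x : ℝ => f x / (x : ℂ)) = fun _ : ℝ => (0 : ℂ) := by
        funext x; rw [hfz x, zero_div]
      rw [hfun]
      exact MemLp.zero
    · have hz : ∫ x : ℝ, ‖f x / (x : ℂ)‖ ^ 2 = 0 := by
        have e : (fun x : ℝ => ‖f x / (x : ℂ)‖ ^ 2) = fun _ : ℝ => (0:ℝ) := by
          funext x; rw [hfz x]; simp
        rw [e, integral_zero]
      rw [hz, Real.sqrt_zero]
      have hnn : (0:ℝ) ≤ Real.sqrt (∫ ω : ℝ, |ω| ^ ((3:ℝ)/2) * ‖fhat f ω‖ ^ 2)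
          + Real.sqrt (∫ ω : ℝ, |ω| ^ ((2:ℝ)) * ‖fhat f ω‖ ^ 2)
          + Real.sqrt (∫ ω : ℝ, |ω| ^ ((4:ℝ)) * ‖fhat f ω‖ ^ 2) := by positivity
      exact mul_nonneg CC_pos.le hnn
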